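/- (Entrywise formula for the square root of the cycle Laplacian.) The matrix L_n is positive semidefinite, and its unique positive semidefinite square root L_n^{1/2} has entries (L_n^{1/2})_{ij} = (2/n) Σ_{m=0}^{n} sin(πm/n) · cos(2πm·d(i,j)/n), where d(i,j) is the cycle distance between i and j. -/

import Mathlib

open Real Matrix Finset

noncomputable section

/-- The Laplacian of the `n`-cycle. -/
def cycLap (n : ℕ) : Matrix (ZMod n) (ZMod n) ℝ :=
  Matrix.of fun i j => if i = j then 2 else if i = j + 1 ∨ j = i + 1 then -1 else 0

/-- The positive semidefinite square root of a positive semidefinite matrix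
(the definition `Matrix.PosSemidef.sqrt` of the older Mathlib, removed since). -/
def Matrix.PosSemidef.sqrt {n : Type*} [Fintype n] [DecidableEq n]
    {A : Matrix n n ℝ} (hA : A.PosSemidef) : Matrix n n ℝ :=
  hA.1.eigenvectorUnitary.1 * diagonal ((↑) ∘ (√·) ∘ hA.1.eigenvalues) *
    (star hA.1.eigenvectorUnitary : Matrix n n ℝ)

/-- The cycle distance on `ℤ/nℤ`. -/
def cycDist (n : ℕ) (p q : ZMod n) : ℕ := min (p - q).val (q - p).val

/-!
The cycle Laplacian is the circulant matrix whose symbol is the cosine series with coefficients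
`2 - 2 cos (2πm/n) = (2 sin (πm/n))²`. By orthogonality of the characters of `ℤ/nℤ`, circulant
matrices given by cosine series with even coefficients multiply by multiplying coefficients, and
those with nonnegative coefficients are positive semidefinite (sums of terms `u uᵀ + w wᵀ` built
from the real and imaginary parts of a character). So the circulant matrix with coefficients
`2 sin (πm/n) ≥ 0` is a positive semidefinite square root of `L_n`, hence it is `L_n^{1/2}`.
-/

open scoped MatrixOrder in
lemma Matrix.PosSemidef.eq_sqrt_of_mul_self_eq {ι : Type*} [Fintype ι] [DecidableEq ι]
    {A B : Matrix ι ι ℝ} (hA : A.PosSemidef) (hB : B.PosSemidef) (h : B * B = A) :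
    B = hA.sqrt := by
  have h1 : CFC.sqrt A = B := CFC.sqrt_unique h hB.nonneg
  rw [CFC.sqrt_eq_real_sqrt A hA.nonneg, cfcₙ_eq_cfc, hA.1.cfc_eq] at h1
  rw [← h1]
  rfl

section CircleCosine

variable {n : ℕ} [NeZero n]

/-- `cos (2π x / n)` for `x : ZMod n`, as the real part of the standard additive character. -/
def cosZMod (x : ZMod n) : ℝ := (ZMod.stdAddChar x).re

lemma cosZMod_natCast_mul (k : ℕ) (x : ZMod n) :
    cosZMod ((k : ZMod n) * x) = cos (2 * π * k * x.val / n) := by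
  rw [cosZMod, ← nsmul_eq_mul, AddChar.map_nsmul_eq_pow, ZMod.stdAddChar_apply,
    ZMod.toCircle_apply, ← Complex.exp_nat_mul,
    show (k : ℂ) * (2 * π * Complex.I * x.val / n) =
      ((2 * π * k * x.val / n : ℝ) : ℂ) * Complex.I by push_cast; ring,
    Complex.exp_ofReal_mul_I_re]

lemma cosZMod_apply (x : ZMod n) : cosZMod x = cos (2 * π * x.val / n) := by
  simpa using cosZMod_natCast_mul 1 x

lemma cosZMod_neg (x : ZMod n) : cosZMod (-x) = cosZMod x := by
  simp [cosZMod, AddChar.map_neg_eq_conj]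

lemma cosZMod_sub (x y : ZMod n) :
    cosZMod (x - y) = (ZMod.stdAddChar x).re * (ZMod.stdAddChar y).re +
      (ZMod.stdAddChar x).im * (ZMod.stdAddChar y).im := by
  simp [cosZMod, sub_eq_add_neg, AddChar.map_add_eq_mul, AddChar.map_neg_eq_conj, Complex.mul_re]

lemma cosZMod_add_add_cosZMod_sub (x y : ZMod n) :
    cosZMod (x + y) + cosZMod (x - y) = 2 * cosZMod x * cosZMod y := by
  simp only [cosZMod, sub_eq_add_neg, AddChar.map_add_eq_mul, AddChar.map_neg_eq_conj,
    Complex.mul_re, Complex.conj_re, Complex.conj_im]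
  ring

lemma sum_cosZMod_add_mul (a c : ZMod n) :
    ∑ k, cosZMod (a + k * c) = if c = 0 then n * cosZMod a else 0 := by
  have h := congrArg (fun z => (ZMod.stdAddChar a * z).re)
    (AddChar.sum_mulShift c (ZMod.isPrimitive_stdAddChar n))
  simp only [mul_sum, Complex.re_sum, ← AddChar.map_add_eq_mul, ZMod.card] at h
  simp only [cosZMod, h]
  split_ifs <;> simp [mul_comm]

lemma sum_cosZMod_mul (c : ZMod n) : ∑ k, cosZMod (k * c) = if c = 0 then (n : ℝ) else 0 := by
  simpa [cosZMod] using sum_cosZMod_add_mul 0 c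

lemma sum_cosZMod_mul_cosZMod (m m' x : ZMod n) :
    ∑ k, cosZMod (m * (x - k)) * cosZMod (m' * k) =
      n / 2 * ((if m' = m then cosZMod (m * x) else 0) +
        (if m' = -m then cosZMod (m * x) else 0)) := by
  have h (k : ZMod n) : cosZMod (m * (x - k)) * cosZMod (m' * k) =
      (cosZMod (m * x + k * (m' - m)) + cosZMod (m * x + k * -(m + m'))) / 2 := by
    rw [show m * x + k * (m' - m) = m * (x - k) + m' * k by ring,
      show m * x + k * -(m + m') = m * (x - k) - m' * k by ring, cosZMod_add_add_cosZMod_sub]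
    ring
  simp only [h, ← sum_div, sum_add_distrib, sum_cosZMod_add_mul, sub_eq_zero,
    neg_eq_zero, add_eq_zero_iff_eq_neg']
  split_ifs <;> ring

/-- The circulant matrix with symbol `cosSeries α` acts on the `m`-th Fourier mode by `α m`. -/
def cosSeries (α : ZMod n → ℝ) (x : ZMod n) : ℝ := (n : ℝ)⁻¹ * ∑ m, α m * cosZMod (m * x)

lemma sum_cosSeries_mul_cosSeries (α β : ZMod n → ℝ) (hβ : ∀ m, β (-m) = β m) (x : ZMod n) :
    ∑ k, cosSeries α (x - k) * cosSeries β k = cosSeries (α * β) x := by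
  have hn : (n : ℝ) ≠ 0 := NeZero.ne _
  calc ∑ k, cosSeries α (x - k) * cosSeries β k
      = (n : ℝ)⁻¹ * (n : ℝ)⁻¹ * ∑ m, α m * ∑ m', β m' *
          ∑ k, cosZMod (m * (x - k)) * cosZMod (m' * k) := by
        simp only [cosSeries, mul_sum, sum_mul]
        rw [sum_comm]
        conv_rhs => rw [sum_comm]
        refine sum_congr rfl fun m' _ => ?_
        rw [sum_comm]
        exact sum_congr rfl fun m _ => sum_congr rfl fun k _ => by ring
    _ = (n : ℝ)⁻¹ * (n : ℝ)⁻¹ * ∑ m, α m * (n * β m * cosZMod (m * x)) := by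
        -- the mode `-m'` gives the same cosine as `m'`
        simp only [sum_cosZMod_mul_cosZMod, mul_add, mul_ite, mul_zero, sum_add_distrib,
          sum_ite_eq', mem_univ, if_true, hβ]
        rw [← mul_add, ← sum_add_distrib]
        exact congrArg _ (sum_congr rfl fun m _ => by ring)
    _ = cosSeries (α * β) x := by
        simp only [cosSeries, mul_sum, Pi.mul_apply]
        exact sum_congr rfl fun m _ => by field_simp

lemma circulant_cosSeries_mul_circulant_cosSeries (α β : ZMod n → ℝ) (hβ : ∀ m, β (-m) = β m) :
    circulant (cosSeries α) * circulant (cosSeries β) = circulant (cosSeries (α * β)) := by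
  rw [circulant_mul, circulant_inj]
  ext x
  simpa [mulVec, dotProduct, circulant_apply] using sum_cosSeries_mul_cosSeries α β hβ x

lemma posSemidef_circulant_cosSeries {α : ZMod n → ℝ} (hα : ∀ m, 0 ≤ α m) :
    (circulant (cosSeries α)).PosSemidef := by
  let u (m : ZMod n) : ZMod n → ℝ := fun i => (ZMod.stdAddChar (m * i)).re
  let w (m : ZMod n) : ZMod n → ℝ := fun i => (ZMod.stdAddChar (m * i)).im
  have h : circulant (cosSeries α) =
      ∑ m, (α m / n) • (vecMulVec (u m) (u m) + vecMulVec (w m) (w m)) := by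
    ext i j
    simp only [circulant_apply, cosSeries, Matrix.sum_apply, Matrix.smul_apply, Matrix.add_apply,
      vecMulVec_apply, smul_eq_mul, mul_sum, mul_sub, cosZMod_sub, u, w]
    exact sum_congr rfl fun m _ => by ring
  rw [h]
  refine posSemidef_sum _ fun m _ => PosSemidef.smul ?_ (div_nonneg (hα m) n.cast_nonneg)
  exact (posSemidef_vecMulVec_self_star (u m)).add (posSemidef_vecMulVec_self_star (w m))

lemma cosSeries_two_sub_two_mul_cosZMod (x : ZMod n) :
    cosSeries (fun m => 2 - 2 * cosZMod m) x =
      2 * (if x = 0 then 1 else 0) - (if x = 1 then 1 else 0) - (if x = -1 then 1 else 0) := by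
  have hn : (n : ℝ) ≠ 0 := NeZero.ne _
  have h (m : ZMod n) : (2 - 2 * cosZMod m) * cosZMod (m * x) =
      2 * cosZMod (m * x) - cosZMod (m * (x + 1)) - cosZMod (m * (x - 1)) := by
    rw [mul_add_one, mul_sub_one]
    linear_combination cosZMod_add_add_cosZMod_sub (m * x) m
  simp only [cosSeries, h, sum_sub_distrib, ← mul_sum, sum_cosZMod_mul,
    add_eq_zero_iff_eq_neg, sub_eq_zero]
  split_ifs <;> field_simp <;> ring

lemma cycLap_eq_circulant (hn : 3 ≤ n) :
    cycLap n = circulant (cosSeries fun m => 2 - 2 * cosZMod m) := by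
  have : Fact (1 < n) := ⟨by omega⟩
  have : Fact (2 < n) := ⟨hn⟩
  have h01 : (0 : ZMod n) ≠ 1 := zero_ne_one
  have h0m1 : (0 : ZMod n) ≠ -1 := (neg_ne_zero.mpr h01.symm).symm
  have h1m1 : (1 : ZMod n) ≠ -1 := ZMod.neg_one_ne_one.symm
  ext i j
  obtain ⟨d, rfl⟩ : ∃ d, i = j + d := ⟨i - j, by ring⟩
  have e1 : j + d = j + 1 ↔ d = 1 := add_right_inj j
  have e2 : j = j + d + 1 ↔ d = -1 := by constructor <;> intro h <;> linear_combination -h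
  rw [circulant_apply, cosSeries_two_sub_two_mul_cosZMod, cycLap, of_apply, add_sub_cancel_left]
  simp only [add_eq_left, e1, e2]
  split_ifs <;> simp_all

def sinSymbol (m : ZMod n) : ℝ := 2 * sin (π * m.val / n)

lemma sinSymbol_nonneg (m : ZMod n) : 0 ≤ sinSymbol m := by
  have hn : (0 : ℝ) < n := Nat.cast_pos.mpr (NeZero.pos n)
  have hm : (m.val : ℝ) ≤ n := by exact_mod_cast m.val_lt.le
  refine mul_nonneg zero_le_two (sin_nonneg_of_nonneg_of_le_pi (by positivity) ?_)
  rw [mul_div_assoc]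
  exact mul_le_of_le_one_right pi_pos.le ((div_le_one hn).mpr hm)

lemma sinSymbol_neg (m : ZMod n) : sinSymbol (-m) = sinSymbol m := by
  have hn : (n : ℝ) ≠ 0 := NeZero.ne _
  rw [sinSymbol, sinSymbol, ZMod.neg_val]
  split_ifs with hm
  · simp [hm]
  · rw [Nat.cast_sub m.val_lt.le, show π * (n - m.val) / n = π - π * m.val / n by field_simp,
      sin_pi_sub]

lemma sinSymbol_mul_sinSymbol : sinSymbol * sinSymbol = fun m : ZMod n => 2 - 2 * cosZMod m := by
  ext m
  rw [Pi.mul_apply, sinSymbol, cosZMod_apply, show 2 * π * m.val / n = 2 * (π * m.val / n) by ring,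
    cos_two_mul]
  linear_combination 4 * sin_sq_add_cos_sq (π * m.val / n)

lemma cos_cycDist (k : ℕ) (i j : ZMod n) :
    cos (2 * π * k * cycDist n i j / n) = cosZMod ((k : ZMod n) * (i - j)) := by
  rw [cycDist]
  rcases min_cases (i - j).val (j - i).val with ⟨h, _⟩ | ⟨h, _⟩ <;> rw [h, ← cosZMod_natCast_mul]
  rw [← neg_sub, mul_neg, cosZMod_neg]

lemma ZMod.sum_univ_eq_sum_range {M : Type*} [AddCommMonoid M] (f : ℕ → M) :
    ∑ x : ZMod n, f x.val = ∑ k ∈ range n, f k := by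
  obtain ⟨k, rfl⟩ := Nat.exists_eq_succ_of_ne_zero (NeZero.ne n)
  exact Fin.sum_univ_eq_sum_range f (k + 1)

lemma cosSeries_sinSymbol_sub (i j : ZMod n) :
    cosSeries sinSymbol (i - j) = (2 / (n : ℝ)) * ∑ m ∈ range (n + 1),
      sin (π * (m : ℝ) / n) * cos (2 * π * (m : ℝ) * (cycDist n i j : ℝ) / n) := by
  have hn : (n : ℝ) ≠ 0 := NeZero.ne _
  rw [sum_range_succ, mul_div_cancel_right₀ π hn, sin_pi, zero_mul, add_zero, cosSeries,
    ← ZMod.sum_univ_eq_sum_range, mul_sum, mul_sum]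
  refine sum_congr rfl fun m _ => ?_
  rw [cos_cycDist, ZMod.natCast_zmod_val, sinSymbol]
  ring

end CircleCosine

/-- Entrywise formula for the square root of the cycle Laplacian:
`L_n` is positive semidefinite, and its unique positive semidefinite square root
has entries `(L_n^{1/2})_{ij} = (2/n) Σ_{m=0}^{n} sin(πm/n) · cos(2πm·d(i,j)/n)`. -/
theorem cycle_laplacian_sqrt_entries (n : ℕ) [NeZero n] (hn : 3 ≤ n) :
    ∃ hL : (cycLap n).PosSemidef, ∀ i j : ZMod n,
      hL.sqrt i j = (2 / (n : ℝ)) * ∑ m ∈ Finset.range (n + 1),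
        Real.sin (π * (m : ℝ) / n) * Real.cos (2 * π * (m : ℝ) * (cycDist n i j : ℝ) / n) := by
  set S : Matrix (ZMod n) (ZMod n) ℝ := circulant (cosSeries sinSymbol)
  have hS : S.PosSemidef := posSemidef_circulant_cosSeries sinSymbol_nonneg
  have hSS : S * S = cycLap n := by
    rw [circulant_cosSeries_mul_circulant_cosSeries _ _ sinSymbol_neg, sinSymbol_mul_sinSymbol,
      cycLap_eq_circulant hn]
  have hL : (cycLap n).PosSemidef := by
    rw [← hSS, ← sq]
    exact hS.pow 2
  refine ⟨hL, fun i j => ?_⟩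
  rw [← hL.eq_sqrt_of_mul_self_eq hS hSS]
  exact cosSeries_sinSymbol_sub i j
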